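/- Let M be a simple connected matroid of rank d+1 ≥ 3 with two different Cremona bases b and b*. Then the support graph G_b(b*) is connected if and only if |b ∩ b*| = 1. -/

import Mathlib

open Set

variable {α : Type*}

/-- The set of non-basis elements on the line through `x` and `y`. -/
def Fij (M : Matroid α) (x y : α) : Set α := M.closure {x, y} \ {x, y}

/-- `b` is a Cremona basis: a base of `M` such that the sets
`Fij = cl{bᵢ,bⱼ} \ {bᵢ,bⱼ}` are pairwise disjoint with union `M.E \ b`. -/
def IsCremonaBasis (M : Matroid α) (b : Set α) : Prop :=
  M.IsBase b ∧
  (∀ x ∈ b, ∀ y ∈ b, ∀ x' ∈ b, ∀ y' ∈ b, x ≠ y → x' ≠ y' →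
    ({x, y} : Set α) ≠ {x', y'} → Disjoint (Fij M x y) (Fij M x' y')) ∧
  (⋃ x ∈ b, ⋃ y ∈ b, ⋃ _ : x ≠ y, Fij M x y) = M.E \ b

/-- The `b`-support of a set `S`. -/
def suppb (M : Matroid α) (b S : Set α) : Set α :=
  (b ∩ S) ∪ ⋃ x ∈ b, ⋃ y ∈ b, ⋃ _ : x ≠ y, ⋃ _ : (S ∩ Fij M x y).Nonempty, ({x, y} : Set α)

/-- Adjacency in the support graph `G_b(S)`: there is an edge between `x` and `y`
for each element of `S ∩ Fij M x y`. -/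
def Adjb (M : Matroid α) (b S : Set α) (x y : α) : Prop :=
  x ∈ b ∧ y ∈ b ∧ x ≠ y ∧ (S ∩ Fij M x y).Nonempty

/-- The support graph `G_b(S)` is connected. -/
def SuppConnected (M : Matroid α) (b S : Set α) : Prop :=
  ∀ x ∈ suppb M b S, ∀ y ∈ suppb M b S, Relation.ReflTransGen (Adjb M b S) x y

/-- The vertex set of the connected component of `x` in the support graph `G_b(S)`. -/
def compOf (M : Matroid α) (b S : Set α) (x : α) : Set α :=
  {y ∈ suppb M b S | Relation.ReflTransGen (Adjb M b S) x y}

/-- A matroid is simple if every pair of (not necessarily distinct) elements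
of the ground set is independent. -/
def MSimple (M : Matroid α) : Prop := ∀ e ∈ M.E, ∀ f ∈ M.E, M.Indep {e, f}

/-- A circuit: a minimal dependent set. -/
def MCircuit (M : Matroid α) (C : Set α) : Prop :=
  C ⊆ M.E ∧ ¬ M.Indep C ∧ ∀ x ∈ C, M.Indep (C \ {x})

/-- A matroid is connected if its ground set is nonempty and every two distinct
elements lie on a common circuit. -/
def MConnected (M : Matroid α) : Prop :=
  M.E.Nonempty ∧ ∀ e ∈ M.E, ∀ f ∈ M.E, e = f ∨ ∃ C, MCircuit M C ∧ e ∈ C ∧ f ∈ C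

/-- The rank of a set in a matroid: the supremum of cardinalities of independent subsets. -/
noncomputable def mRank (M : Matroid α) (X : Set α) : ℕ :=
  sSup {n | ∃ I, M.Indep I ∧ I ⊆ X ∧ I.ncard = n}

/-!
Every `z ∈ b \ b*` lies on the `b*`-line through some `c ∈ b ∩ b*` and a point `g` of the `b`-line
`z c`. Indeed, `z` is spanned by the `b`-support of the `b*`-line `γ f` through it, so one end `f`
lies on a `b`-line `z q`; then `γ` lies on the line `z q` too, so either `γ = q ∈ b ∩ b*`, or the
`b`-line `z q` carries two points of `b*`. The latter is impossible: a `b`-line `z w` carrying two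
points of `b*` is the only nonempty `b`-line through `z` or `w`, so it and the span of `b \ {z, w}`
are skew and cover `M`, and no circuit meets both `z` and `b \ {z, w}`.

Hence in `G_b(b*)` each vertex of `b \ b*` has exactly one neighbour, which lies in `b ∩ b*`, and
there are no other edges: the components are the stars around the points of `b ∩ b*`.
-/

namespace MSimple

variable {M : Matroid α} {a b x y : α}

lemma eq_of_mem_closure_singleton (hM : MSimple M) (h : x ∈ M.closure {y}) : x = y := by
  have hxE : x ∈ M.E := M.closure_subset_ground _ h
  by_cases hyE : y ∈ M.E
  · by_contra hxy
    have := (hM x hxE y hyE).notMem_closure_sdiff_of_mem (mem_insert x {y})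
    rw [pair_sdiff_left hxy] at this
    exact this h
  · have hx : M.Indep {x} := by simpa using hM x hxE x hxE
    rw [← M.closure_inter_ground, singleton_inter_eq_empty.2 hyE] at h
    exact absurd h (by simpa using hx.notMem_closure_sdiff_of_mem (mem_singleton x))

lemma closure_pair_eq_of_mem (hM : MSimple M) (hx : x ∈ M.closure {a, b}) (hxb : x ≠ b) :
    M.closure {x, b} = M.closure {a, b} :=
  M.closure_insert_congr ⟨hx, fun h => hxb (hM.eq_of_mem_closure_singleton h)⟩

lemma closure_pair_eq_of_mem_of_mem (hM : MSimple M) (hx : x ∈ M.closure {a, b})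
    (hy : y ∈ M.closure {a, b}) (hxy : x ≠ y) : M.closure {x, y} = M.closure {a, b} := by
  by_cases hxb : x = b
  · subst hxb
    rw [pair_comm, hM.closure_pair_eq_of_mem hy (Ne.symm hxy)]
  · have hxb' := hM.closure_pair_eq_of_mem hx hxb
    rw [pair_comm x b] at hxb'
    rw [← hxb', pair_comm, hM.closure_pair_eq_of_mem (hxb' ▸ hy) (Ne.symm hxy)]

end MSimple

namespace Matroid

variable {M : Matroid α} {I J X Y A B : Set α} {x : α}

lemma Indep.mem_of_mem_closure (hI : M.Indep I) (hJ : J ⊆ I) (hx : x ∈ I)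
    (hxJ : x ∈ M.closure J) : x ∈ J :=
  (hI.closure_inter_eq_self_of_subset hJ).subset ⟨hxJ, hx⟩

lemma Indep.union_indep_of_eRk_union_eq [M.RankFinite] (hA : M.Indep A) (hB : M.Indep B)
    (hAX : A ⊆ X) (hBY : B ⊆ Y) (hXY : M.eRk (X ∪ Y) = M.eRk X + M.eRk Y) :
    M.Indep (A ∪ B) := by
  have hX : M.eRk X ≠ ⊤ := (M.isRkFinite_set X).eRk_lt_top.ne
  have hY : M.eRk Y ≠ ⊤ := (M.isRkFinite_set Y).eRk_lt_top.ne
  have hAY : A.encard + M.eRk Y ≤ M.eRk (A ∪ Y) := by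
    refine (ENat.add_le_add_iff_right hX).1 ?_
    calc A.encard + M.eRk Y + M.eRk X
        = A.encard + M.eRk ((A ∪ Y) ∪ X) := by
          rw [union_right_comm, union_eq_self_of_subset_left hAX, hXY,
            add_comm (M.eRk X), add_assoc]
      _ ≤ M.eRk ((A ∪ Y) ∩ X) + M.eRk ((A ∪ Y) ∪ X) := by
          gcongr; exact hA.encard_le_eRk_of_subset (subset_inter subset_union_left hAX)
      _ ≤ M.eRk (A ∪ Y) + M.eRk X := M.eRk_inter_add_eRk_union_le _ _
  have hAB : (A ∪ B).encard ≤ M.eRk (A ∪ B) := by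
    refine (ENat.add_le_add_iff_right hY).1 ?_
    calc (A ∪ B).encard + M.eRk Y
        ≤ B.encard + (A.encard + M.eRk Y) := by
          rw [← add_assoc, add_comm B.encard]; gcongr; exact encard_union_le A B
      _ ≤ M.eRk ((A ∪ B) ∩ Y) + M.eRk ((A ∪ B) ∪ Y) := by
          gcongr
          · exact hB.encard_le_eRk_of_subset (subset_inter subset_union_right hBY)
          · exact hAY.trans (M.eRk_mono (union_subset_union_left _ subset_union_left))
      _ ≤ M.eRk (A ∪ B) + M.eRk Y := M.eRk_inter_add_eRk_union_le _ _
  exact (M.isRkFinite_set _).indep_of_encard_le_eRk hAB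

end Matroid

open Matroid

variable {M : Matroid α} {b bs X Y S : Set α} {c c' e f g p q r s u v w x y z η ξ : α}

lemma MCircuit.subset_or_subset_of_eRk_union_eq [M.RankFinite] {C : Set α} (hC : MCircuit M C)
    (hCXY : C ⊆ X ∪ Y) (hXY : M.eRk (X ∪ Y) = M.eRk X + M.eRk Y) : C ⊆ X ∨ C ⊆ Y := by
  by_contra! h
  obtain ⟨⟨x, hxC, hxX⟩, ⟨y, hyC, hyY⟩⟩ := And.imp not_subset.1 not_subset.1 h
  have hyX : y ∈ X := (hCXY hyC).resolve_right hyY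
  have hCX : M.Indep (C ∩ X) := (hC.2.2 x hxC).subset fun a ha => ⟨ha.1, fun h => hxX (h ▸ ha.2)⟩
  have hCY : M.Indep (C \ X) := (hC.2.2 y hyC).subset fun a ha => ⟨ha.1, fun h => ha.2 (h ▸ hyX)⟩
  refine hC.2.1 ?_
  rw [← inter_union_sdiff C X]
  exact hCX.union_indep_of_eRk_union_eq hCY inter_subset_right
    (fun a ha => (hCXY ha.1).resolve_left ha.2) hXY

lemma eq_of_pair_eq_pair {a b c : α} (h : ({a, b} : Set α) = {a, c}) : b = c := by
  rcases pair_eq_pair_iff.1 h with ⟨-, h⟩ | ⟨h₁, h₂⟩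
  exacts [h, h₂.trans h₁]

lemma Fij_comm (M : Matroid α) (x y : α) : Fij M x y = Fij M y x := by
  rw [Fij, Fij, pair_comm]

lemma mem_Fij_iff : x ∈ Fij M p q ↔ x ∈ M.closure {p, q} ∧ x ≠ p ∧ x ≠ q := by
  simp [Fij, not_or]

lemma mem_ground_of_mem_Fij (hx : x ∈ Fij M p q) : x ∈ M.E :=
  M.closure_subset_ground _ hx.1

lemma exists_mem_Fij_of_mem_pair (hx : x ∈ Fij M p q) (hr : r ∈ ({p, q} : Set α)) :
    ∃ s ∈ ({p, q} : Set α), x ∈ Fij M r s := by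
  rcases hr with rfl | rfl
  exacts [⟨q, by simp, hx⟩, ⟨p, by simp, Fij_comm M p r ▸ hx⟩]

namespace MSimple

lemma ne_of_mem_Fij (hM : MSimple M) (hx : x ∈ Fij M p q) : p ≠ q := by
  rintro rfl
  rw [mem_Fij_iff, pair_eq_singleton] at hx
  exact hx.2.1 (hM.eq_of_mem_closure_singleton hx.1)

lemma mem_Fij_rotate (hM : MSimple M) (hu : u ∈ M.E) (hg : g ∈ Fij M u c) :
    u ∈ Fij M c g := by
  have hgc : M.closure {g, c} = M.closure {u, c} :=
    hM.closure_pair_eq_of_mem hg.1 (mem_Fij_iff.1 hg).2.2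
  refine Fij_comm M g c ▸ mem_Fij_iff.2 ⟨hgc ▸ M.mem_closure_of_mem' (mem_insert _ _),
    fun h => (mem_Fij_iff.1 hg).2.1 h.symm, hM.ne_of_mem_Fij hg⟩

lemma mem_Fij_of_mem_Fij_of_mem_Fij (hM : MSimple M) (hz : z ∈ M.E) (he : e ∈ Fij M z w)
    (hf : f ∈ Fij M z w) (hef : e ≠ f) : z ∈ Fij M e f := by
  refine mem_Fij_iff.2 ⟨?_, fun h => (mem_Fij_iff.1 he).2.1 h.symm,
    fun h => (mem_Fij_iff.1 hf).2.1 h.symm⟩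
  rw [hM.closure_pair_eq_of_mem_of_mem he.1 hf.1 hef]
  exact M.mem_closure_of_mem' (mem_insert _ _)

lemma closure_pair_eq_of_mem_Fij_of_mem_Fij (hM : MSimple M) (hg : g ∈ Fij M z q)
    (hq : q ∈ Fij M g e) : M.closure {z, q} = M.closure {g, e} := by
  rw [← hM.closure_pair_eq_of_mem hg.1 (mem_Fij_iff.1 hg).2.2, pair_comm,
    hM.closure_pair_eq_of_mem (pair_comm g e ▸ hq.1) (mem_Fij_iff.1 hq).2.1, pair_comm]

end MSimple

namespace Matroid.Indep

lemma notMem_of_mem_Fij (hI : M.Indep b) (hp : p ∈ b) (hq : q ∈ b) (hx : x ∈ Fij M p q) :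
    x ∉ b :=
  fun hxb => hx.2 (hI.mem_of_mem_closure (pair_subset hp hq) hxb hx.1)

lemma pair_subset_of_mem_Fij (hM : MSimple M) (hI : M.Indep b) (hp : p ∈ b) (hq : q ∈ b)
    (hS : S ⊆ b) (hx : x ∈ Fij M p q) (hxS : x ∈ M.closure S) : ({p, q} : Set α) ⊆ S := by
  have hx' : x ∈ M.closure ({p, q} ∩ S) := by
    rw [(hI.subset (union_subset (pair_subset hp hq) hS)).closure_inter_eq_inter_closure]
    exact ⟨hx.1, hxS⟩
  have hxpq := mem_Fij_iff.1 hx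
  refine pair_subset (by_contra fun hpS => hxpq.2.2 ?_) (by_contra fun hqS => hxpq.2.1 ?_)
  · refine hM.eq_of_mem_closure_singleton (M.closure_subset_closure ?_ hx')
    rintro a ⟨rfl | rfl, ha⟩
    exacts [absurd ha hpS, rfl]
  · refine hM.eq_of_mem_closure_singleton (M.closure_subset_closure ?_ hx')
    rintro a ⟨rfl | rfl, ha⟩
    exacts [rfl, absurd ha hqS]

end Matroid.Indep

lemma mem_suppb_iff :
    r ∈ suppb M b X ↔ r ∈ b ∧ (r ∈ X ∨ ∃ q ∈ b, q ≠ r ∧ ∃ x ∈ X, x ∈ Fij M r q) := by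
  simp only [suppb, mem_union, mem_inter_iff, mem_iUnion, mem_insert_iff, mem_singleton_iff]
  constructor
  · rintro (⟨hr, hrX⟩ | ⟨p, hp, q, hq, hpq, ⟨x, hxX, hx⟩, rfl | rfl⟩)
    · exact ⟨hr, .inl hrX⟩
    · exact ⟨hp, .inr ⟨q, hq, hpq.symm, x, hxX, hx⟩⟩
    · exact ⟨hq, .inr ⟨p, hp, hpq, x, hxX, Fij_comm M p r ▸ hx⟩⟩
  · rintro ⟨hr, hrX | ⟨q, hq, hqr, x, hxX, hx⟩⟩
    · exact .inl ⟨hr, hrX⟩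
    · exact .inr ⟨r, hr, q, hq, hqr.symm, ⟨x, hxX, hx⟩, .inl rfl⟩

lemma suppb_subset : suppb M b X ⊆ b :=
  fun _ hr => (mem_suppb_iff.1 hr).1

namespace IsCremonaBasis

lemma exists_mem_Fij (hb : IsCremonaBasis M b) (hx : x ∈ M.E) (hxb : x ∉ b) :
    ∃ p ∈ b, ∃ q ∈ b, p ≠ q ∧ x ∈ Fij M p q := by
  have hx' : x ∈ M.E \ b := ⟨hx, hxb⟩
  rw [← hb.2.2] at hx'
  simpa only [mem_iUnion, exists_prop] using hx'

lemma pair_eq_of_mem_Fij (hM : MSimple M) (hb : IsCremonaBasis M b) (hp : p ∈ b) (hq : q ∈ b)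
    (hr : r ∈ b) (hs : s ∈ b) (hx : x ∈ Fij M p q) (hx' : x ∈ Fij M r s) :
    ({p, q} : Set α) = {r, s} := by
  by_contra hne
  exact (hb.2.1 p hp q hq r hr s hs (hM.ne_of_mem_Fij hx) (hM.ne_of_mem_Fij hx') hne).ne_of_mem
    hx hx' rfl

lemma exists_mem_Fij_of_mem_closure (hM : MSimple M) (hb : IsCremonaBasis M b) (hS : S ⊆ b)
    (hxS : x ∉ S) (hx : x ∈ M.closure S) : ∃ p ∈ S, ∃ q ∈ S, x ∈ Fij M p q := by
  have hxb : x ∉ b := fun hxb => hxS (hb.1.indep.mem_of_mem_closure hS hxb hx)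
  obtain ⟨p, hp, q, hq, -, hxF⟩ := hb.exists_mem_Fij (M.closure_subset_ground _ hx) hxb
  have hpq := hb.1.indep.pair_subset_of_mem_Fij hM hp hq hS hxF hx
  exact ⟨p, hpq (mem_insert _ _), q, hpq (mem_insert_of_mem _ rfl), hxF⟩

lemma subset_closure_suppb (hb : IsCremonaBasis M b) (hX : X ⊆ M.E) :
    X ⊆ M.closure (suppb M b X) := by
  intro x hxX
  by_cases hxb : x ∈ b
  · exact M.mem_closure_of_mem (mem_suppb_iff.2 ⟨hxb, .inl hxX⟩)
      (suppb_subset.trans hb.1.subset_ground)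
  · obtain ⟨p, hp, q, hq, hpq, hx⟩ := hb.exists_mem_Fij (hX hxX) hxb
    refine M.closure_subset_closure (pair_subset ?_ ?_) hx.1
    · exact mem_suppb_iff.2 ⟨hp, .inr ⟨q, hq, hpq.symm, x, hxX, hx⟩⟩
    · exact mem_suppb_iff.2 ⟨hq, .inr ⟨p, hp, hpq, x, hxX, Fij_comm M p q ▸ hx⟩⟩

lemma mem_suppb_of_mem_closure (hb : IsCremonaBasis M b) (hX : X ⊆ M.E) (hz : z ∈ b)
    (hzX : z ∈ M.closure X) : z ∈ suppb M b X :=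
  hb.1.indep.mem_of_mem_closure suppb_subset hz
    (M.closure_subset_closure_of_subset_closure (hb.subset_closure_suppb hX) hzX)

lemma pair_subset_suppb_of_mem_closure (hM : MSimple M) (hb : IsCremonaBasis M b)
    (hX : X ⊆ M.E) (hp : p ∈ b) (hq : q ∈ b) (hx : x ∈ Fij M p q) (hxX : x ∈ M.closure X) :
    ({p, q} : Set α) ⊆ suppb M b X :=
  hb.1.indep.pair_subset_of_mem_Fij hM hp hq suppb_subset hx
    (M.closure_subset_closure_of_subset_closure (hb.subset_closure_suppb hX) hxX)

lemma exists_Fij_of_notMem (hM : MSimple M) (hb : IsCremonaBasis M b) (hbs : IsCremonaBasis M bs)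
    (hz : z ∈ b) (hzbs : z ∉ bs) :
    ∃ q ∈ b, ∃ f ∈ bs, ∃ γ ∈ bs, f ∈ Fij M z q ∧ γ ∈ M.closure {z, q} ∧ z ∈ Fij M γ f := by
  have hbsE := hbs.1.subset_ground
  obtain ⟨γ₀, hγ₀, δ₀, hδ₀, -, hzF⟩ := hbs.exists_mem_Fij (hb.1.subset_ground hz) hzbs
  have hpair : ({γ₀, δ₀} : Set α) ⊆ bs := pair_subset hγ₀ hδ₀
  obtain ⟨-, hzX | ⟨q, hq, -, f, hfX, hfF⟩⟩ :=
    mem_suppb_iff.1 (hb.mem_suppb_of_mem_closure (hpair.trans hbsE) hz hzF.1)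
  · exact absurd (hpair hzX) hzbs
  obtain ⟨γ, hγX, hzγ⟩ := exists_mem_Fij_of_mem_pair hzF hfX
  rw [Fij_comm] at hzγ
  have hγ : γ ∈ M.closure {z, f} := by
    rw [hM.closure_pair_eq_of_mem hzγ.1 (mem_Fij_iff.1 hzγ).2.2]
    exact M.subset_closure _ (pair_subset (hbsE (hpair hγX)) (hbsE (hpair hfX))) (mem_insert _ _)
  refine ⟨q, hq, f, hpair hfX, γ, hpair hγX, hfF, ?_, hzγ⟩
  refine M.closure_subset_closure_of_subset_closure (pair_subset ?_ hfF.1) hγ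
  exact M.mem_closure_of_mem' (mem_insert _ _) (hb.1.subset_ground hz)

lemma notMem_of_nontrivial_inter_Fij (hM : MSimple M) (hb : IsCremonaBasis M b)
    (hbs : IsCremonaBasis M bs) (hz : z ∈ b) (hdbl : (bs ∩ Fij M z w).Nontrivial) : z ∉ bs := by
  obtain ⟨e, ⟨he, heF⟩, f, ⟨hf, hfF⟩, hef⟩ := hdbl
  exact hbs.1.indep.notMem_of_mem_Fij he hf
    (hM.mem_Fij_of_mem_Fij_of_mem_Fij (hb.1.subset_ground hz) heF hfF hef)

lemma eq_of_inter_Fij_nonempty (hM : MSimple M) (hb : IsCremonaBasis M b)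
    (hbs : IsCremonaBasis M bs) (hz : z ∈ b) (hw : w ∈ b) (hq : q ∈ b)
    (hdbl : (bs ∩ Fij M z w).Nontrivial) (hzq : (bs ∩ Fij M z q).Nonempty) : q = w := by
  obtain ⟨g, hg, hgF⟩ := hzq
  have hbE := hb.1.subset_ground
  obtain ⟨e, ⟨he, heF⟩, f, ⟨hf, hfF⟩, hef⟩ := hdbl
  have hz_ef : z ∈ Fij M e f := hM.mem_Fij_of_mem_Fij_of_mem_Fij (hbE hz) heF hfF hef
  have hzbs : z ∉ bs := hbs.1.indep.notMem_of_mem_Fij he hf hz_ef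
  by_contra hqw
  have hgef : g ∉ ({e, f} : Set α) := by
    rintro (rfl | rfl)
    exacts [hqw (eq_of_pair_eq_pair (hb.pair_eq_of_mem_Fij hM hz hq hz hw hgF heF)),
      hqw (eq_of_pair_eq_pair (hb.pair_eq_of_mem_Fij hM hz hq hz hw hgF hfF))]
  have hT : ({g, e, f} : Set α) ⊆ bs := insert_subset hg (pair_subset he hf)
  have hqT : q ∉ ({g, e, f} : Set α) := by
    rintro (rfl | rfl | rfl)
    exacts [hb.1.indep.notMem_of_mem_Fij hz hq hgF hq, hb.1.indep.notMem_of_mem_Fij hz hw heF hq,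
      hb.1.indep.notMem_of_mem_Fij hz hw hfF hq]
  have hq_T : q ∈ M.closure {g, e, f} := by
    refine M.closure_subset_closure_of_subset_closure (pair_subset ?_ ?_)
      (hM.mem_Fij_rotate (hbE hq) (hM.mem_Fij_rotate (hbE hz) hgF)).1
    · exact M.mem_closure_of_mem (mem_insert _ _) (hT.trans hbs.1.subset_ground)
    · exact M.closure_subset_closure (subset_insert _ _) hz_ef.1
  obtain ⟨h, hh, h', hh', hqF⟩ := hbs.exists_mem_Fij_of_mem_closure hM hT hqT hq_T
  by_cases hgh : g ∈ ({h, h'} : Set α)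
  · obtain ⟨e', he', hqF'⟩ := exists_mem_Fij_of_mem_pair hqF hgh
    have he'bs : e' ∈ bs := hT (pair_subset hh hh' he')
    have hz_ge' : z ∈ Fij M g e' := by
      refine mem_Fij_iff.2 ⟨?_, fun h => hzbs (h ▸ hg), fun h => hzbs (h ▸ he'bs)⟩
      rw [← hM.closure_pair_eq_of_mem_Fij_of_mem_Fij hgF hqF']
      exact M.mem_closure_of_mem' (mem_insert _ _) (hbE hz)
    exact hgef (hbs.pair_eq_of_mem_Fij hM hg he'bs he hf hz_ge' hz_ef ▸ mem_insert _ _)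
  · have hq_zw : q ∈ M.closure {z, w} := by
      rw [← hM.closure_pair_eq_of_mem_of_mem heF.1 hfF.1 hef]
      refine M.closure_subset_closure (fun a ha => ?_) hqF.1
      exact (pair_subset hh hh' ha).resolve_left fun hag => hgh (hag ▸ ha)
    rcases hb.1.indep.mem_of_mem_closure (pair_subset hz hw) hq hq_zw with rfl | rfl
    exacts [hM.ne_of_mem_Fij hgF rfl, hqw rfl]

lemma eq_of_mem_Fij_of_mem_Fij (hM : MSimple M) (hb : IsCremonaBasis M b)
    (hbs : IsCremonaBasis M bs) (hz : z ∈ b) (hw : w ∈ b) (hq : q ∈ b)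
    (hdbl : (bs ∩ Fij M z w).Nontrivial) (hη : η ∈ bs) (hηF : η ∈ Fij M z w) (hξ : ξ ∈ bs)
    (hxF : x ∈ Fij M z q) (hx : x ∈ Fij M η ξ) : q = w := by
  have hbsE := hbs.1.subset_ground
  by_contra hqw
  have hqzw : q ∉ ({z, w} : Set α) := by
    rintro (rfl | rfl)
    exacts [hM.ne_of_mem_Fij hxF rfl, hqw rfl]
  have hηξ : ({η, ξ} : Set α) ⊆ bs := pair_subset hη hξ
  obtain ⟨-, hqX | ⟨q₂, hq₂, -, ζ, hζX, hζF⟩⟩ := mem_suppb_iff.1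
    (hb.pair_subset_suppb_of_mem_closure hM (hηξ.trans hbsE) hz hq hxF hx.1
      (mem_insert_of_mem _ rfl))
  · rcases hqX with rfl | rfl
    · exact hb.1.indep.notMem_of_mem_Fij hz hw hηF hq
    · have hη_zq : η ∈ M.closure {z, q} := by
        rw [← hM.closure_pair_eq_of_mem hxF.1 (mem_Fij_iff.1 hxF).2.2,
          hM.closure_pair_eq_of_mem hx.1 (mem_Fij_iff.1 hx).2.2]
        exact M.mem_closure_of_mem' (mem_insert _ _) (hbsE hη)
      rcases hb.1.indep.pair_subset_of_mem_Fij hM hz hw (pair_subset hz hq) hηF hη_zq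
        (mem_insert_of_mem _ rfl) with h | h
      exacts [hM.ne_of_mem_Fij hηF h.symm, hqw h.symm]
  rcases hζX with rfl | rfl
  · exact hqzw (hb.pair_eq_of_mem_Fij hM hq hq₂ hz hw hζF hηF ▸ mem_insert _ _)
  have hζ : ζ ∈ M.closure {q, z, w} := by
    refine M.closure_subset_closure_of_subset_closure (pair_subset ?_ ?_)
      (hM.closure_pair_eq_of_mem (pair_comm η ζ ▸ hx.1) (mem_Fij_iff.1 hx).2.1 ▸
        M.mem_closure_of_mem' (mem_insert _ _) (hbsE hξ))
    · exact M.closure_subset_closure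
        (pair_subset (mem_insert_of_mem _ (mem_insert _ _)) (mem_insert _ _)) hxF.1
    · exact M.closure_subset_closure (subset_insert _ _) hηF.1
  rcases hb.1.indep.pair_subset_of_mem_Fij hM hq hq₂ (insert_subset hq (pair_subset hz hw))
    hζF hζ (mem_insert_of_mem _ rfl) with rfl | rfl | rfl
  · exact hM.ne_of_mem_Fij hζF rfl
  · exact hqw (hb.eq_of_inter_Fij_nonempty hM hbs hz hw hq hdbl ⟨ζ, hξ, Fij_comm M q _ ▸ hζF⟩)
  · exact hqzw (.inl (hb.eq_of_inter_Fij_nonempty hM hbs hw hz hq (Fij_comm M z _ ▸ hdbl)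
      ⟨ζ, hξ, Fij_comm M q _ ▸ hζF⟩))

lemma eq_of_Fij_nonempty (hM : MSimple M) (hb : IsCremonaBasis M b)
    (hbs : IsCremonaBasis M bs) (hz : z ∈ b) (hw : w ∈ b) (hq : q ∈ b)
    (hdbl : (bs ∩ Fij M z w).Nontrivial) (hzq : (Fij M z q).Nonempty) : q = w := by
  obtain ⟨x, hxF⟩ := hzq
  by_cases hxbs : x ∈ bs
  · exact hb.eq_of_inter_Fij_nonempty hM hbs hz hw hq hdbl ⟨x, hxbs, hxF⟩
  obtain ⟨γ, hγ, δ, hδ, -, hx⟩ := hbs.exists_mem_Fij (mem_ground_of_mem_Fij hxF) hxbs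
  have hγδ : ({γ, δ} : Set α) ⊆ bs := pair_subset hγ hδ
  obtain ⟨-, hzX | ⟨w', hw', -, η, hηX, hηF⟩⟩ := mem_suppb_iff.1
    (hb.pair_subset_suppb_of_mem_closure hM (hγδ.trans hbs.1.subset_ground) hz hq hxF hx.1
      (mem_insert _ _))
  · exact absurd (hγδ hzX) (hb.notMem_of_nontrivial_inter_Fij hM hbs hz hdbl)
  replace hηF : η ∈ Fij M z w :=
    hb.eq_of_inter_Fij_nonempty hM hbs hz hw hw' hdbl ⟨η, hγδ hηX, hηF⟩ ▸ hηF
  obtain ⟨ξ, hξX, hx'⟩ := exists_mem_Fij_of_mem_pair hx hηX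
  exact hb.eq_of_mem_Fij_of_mem_Fij hM hbs hz hw hq hdbl (hγδ hηX) hηF (hγδ hξX) hxF hx'

lemma ground_subset_closure_union_of_nontrivial (hM : MSimple M) (hb : IsCremonaBasis M b)
    (hbs : IsCremonaBasis M bs) (hz : z ∈ b) (hw : w ∈ b) (hdbl : (bs ∩ Fij M z w).Nontrivial) :
    M.E ⊆ M.closure {z, w} ∪ M.closure (b \ {z, w}) := by
  have hbE := hb.1.subset_ground
  intro x hx
  by_cases hxb : x ∈ b
  · by_cases hxzw : x ∈ ({z, w} : Set α)
    · exact .inl (M.mem_closure_of_mem hxzw (pair_subset (hbE hz) (hbE hw)))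
    · exact .inr (M.mem_closure_of_mem ⟨hxb, hxzw⟩ (sdiff_subset.trans hbE))
  obtain ⟨p, hp, q, hq, -, hxF⟩ := hb.exists_mem_Fij hx hxb
  have hend : ∀ {p q}, q ∈ b → x ∈ Fij M p q → p ∈ ({z, w} : Set α) → x ∈ M.closure {z, w} := by
    rintro p q hq hxF (rfl | rfl)
    · exact hb.eq_of_Fij_nonempty hM hbs hz hw hq hdbl ⟨x, hxF⟩ ▸ hxF.1
    · rw [pair_comm]
      exact hb.eq_of_Fij_nonempty hM hbs hw hz hq (Fij_comm M _ _ ▸ hdbl) ⟨x, hxF⟩ ▸ hxF.1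
  by_cases hpzw : p ∈ ({z, w} : Set α)
  · exact .inl (hend hq hxF hpzw)
  by_cases hqzw : q ∈ ({z, w} : Set α)
  · exact .inl (hend hp (Fij_comm M p q ▸ hxF) hqzw)
  exact .inr (M.closure_subset_closure
    (show ({p, q} : Set α) ⊆ b \ {z, w} from pair_subset ⟨hp, hpzw⟩ ⟨hq, hqzw⟩) hxF.1)

lemma inter_Fij_subsingleton [M.RankFinite] (hM : MSimple M) (hconn : MConnected M)
    (hb : IsCremonaBasis M b) (hbs : IsCremonaBasis M bs) (hb3 : 3 ≤ b.ncard) (hz : z ∈ b)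
    (hw : w ∈ b) : (bs ∩ Fij M z w).Subsingleton := by
  by_contra hdbl
  rw [not_subsingleton_iff] at hdbl
  have hbE := hb.1.subset_ground
  have hzw : ({z, w} : Set α) ⊆ b := pair_subset hz hw
  obtain ⟨q, hq, hqzw⟩ : ∃ q ∈ b, q ∉ ({z, w} : Set α) := by
    by_contra! h
    have := (ncard_le_ncard h).trans (ncard_insert_le z {w})
    rw [ncard_singleton] at this
    omega
  have hskew : M.eRk (M.closure {z, w} ∪ M.closure (b \ {z, w})) =
      M.eRk (M.closure {z, w}) + M.eRk (M.closure (b \ {z, w})) := by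
    rw [eRk_union_closure_left_eq, eRk_union_closure_right_eq, union_sdiff_cancel hzw,
      eRk_closure_eq, eRk_closure_eq, hb.1.indep.eRk_eq_encard,
      (hb.1.indep.subset hzw).eRk_eq_encard, (hb.1.indep.subset sdiff_subset).eRk_eq_encard,
      ← encard_union_eq disjoint_sdiff_right, union_sdiff_cancel hzw]
  obtain ⟨C, hC, hzC, hqC⟩ := (hconn.2 z (hbE hz) q (hbE hq)).resolve_left
    fun h => hqzw (h ▸ mem_insert _ _)
  rcases hC.subset_or_subset_of_eRk_union_eq
    (hC.1.trans (hb.ground_subset_closure_union_of_nontrivial hM hbs hz hw hdbl)) hskew with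
    hCL | hCH
  · exact hqzw (hb.1.indep.mem_of_mem_closure hzw hq (hCL hqC))
  · exact (hb.1.indep.mem_of_mem_closure sdiff_subset hz (hCH hzC)).2 (mem_insert _ _)

lemma exists_mem_inter_Fij [M.RankFinite] (hM : MSimple M) (hconn : MConnected M)
    (hb : IsCremonaBasis M b) (hbs : IsCremonaBasis M bs) (hb3 : 3 ≤ b.ncard) (hz : z ∈ b)
    (hzbs : z ∉ bs) : ∃ c ∈ b ∩ bs, ∃ g ∈ bs, g ∈ Fij M z c ∧ z ∈ Fij M c g := by
  obtain ⟨q, hq, f, hf, γ, hγ, hfF, hγq, hzF⟩ := hb.exists_Fij_of_notMem hM hbs hz hzbs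
  by_cases hγb : γ ∈ b
  · rcases hb.1.indep.mem_of_mem_closure (pair_subset hz hq) hγb hγq with rfl | rfl
    · exact absurd hγ hzbs
    · exact ⟨γ, ⟨hq, hγ⟩, f, hf, hfF, hzF⟩
  · refine absurd (hb.inter_Fij_subsingleton hM hconn hbs hb3 hz hq) (not_subsingleton_iff.2 ?_)
    refine ⟨γ, ⟨hγ, mem_Fij_iff.2 ⟨hγq, ?_, ?_⟩⟩, f, ⟨hf, hfF⟩, hM.ne_of_mem_Fij hzF⟩
    · rintro rfl; exact hzbs hγ
    · rintro rfl; exact hγb hq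

end IsCremonaBasis

namespace Adjb

lemma symm (h : Adjb M b S x y) : Adjb M b S y x := by
  obtain ⟨hx, hy, hxy, g, hgS, hg⟩ := h
  exact ⟨hy, hx, hxy.symm, g, hgS, Fij_comm M x y ▸ hg⟩

lemma notMem_of_mem (hI : M.Indep bs) (h : Adjb M b bs u v) (hu : u ∈ bs) : v ∉ bs := by
  obtain ⟨-, -, -, g, hg, hgF⟩ := h
  exact fun hv => hgF.2 (hI.mem_of_mem_closure (pair_subset hu hv) hg hgF.1)

lemma mem_of_notMem [M.RankFinite] (hM : MSimple M) (hconn : MConnected M)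
    (hb : IsCremonaBasis M b) (hbs : IsCremonaBasis M bs) (hb3 : 3 ≤ b.ncard)
    (h : Adjb M b bs u v) (hu : u ∉ bs) : v ∈ bs := by
  obtain ⟨hub, hvb, -, g, hg, hgF⟩ := h
  by_contra hv
  obtain ⟨cu, ⟨hcub, hcubs⟩, gu, hgu, hguF, huF⟩ :=
    hb.exists_mem_inter_Fij hM hconn hbs hb3 hub hu
  obtain ⟨cv, ⟨hcvb, hcvbs⟩, gv, hgv, hgvF, hvF⟩ :=
    hb.exists_mem_inter_Fij hM hconn hbs hb3 hvb hv
  have hsub : ({cu, gu, cv, gv} : Set α) ⊆ bs :=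
    insert_subset hcubs (insert_subset hgu (pair_subset hcvbs hgv))
  have hg' : g ∈ M.closure {cu, gu, cv, gv} := by
    refine M.closure_subset_closure_of_subset_closure (pair_subset ?_ ?_) hgF.1
    · exact M.closure_subset_closure (pair_subset (mem_insert _ _)
        (mem_insert_of_mem _ (mem_insert _ _))) huF.1
    · exact M.closure_subset_closure (subset_insert _ _ |>.trans (subset_insert _ _)) hvF.1
  have hgb : g ∉ b := hb.1.indep.notMem_of_mem_Fij hub hvb hgF
  rcases hbs.1.indep.mem_of_mem_closure hsub hg hg' with rfl | rfl | rfl | rfl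
  · exact hgb hcub
  · exact hv (eq_of_pair_eq_pair (hb.pair_eq_of_mem_Fij hM hub hcub hub hvb hguF hgF) ▸ hcubs)
  · exact hgb hcvb
  · exact hu (eq_of_pair_eq_pair
      (hb.pair_eq_of_mem_Fij hM hvb hcvb hvb hub hgvF (Fij_comm M u v ▸ hgF)) ▸ hcvbs)

lemma eq_of_adjb (hM : MSimple M) (hb : IsCremonaBasis M b) (hbs : IsCremonaBasis M bs)
    (h : Adjb M b bs u c) (h' : Adjb M b bs u c') (hc : c ∈ bs) (hc' : c' ∈ bs) : c = c' := by
  obtain ⟨hub, hcb, -, g, hg, hgF⟩ := h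
  obtain ⟨-, hc'b, -, g', hg', hgF'⟩ := h'
  have hE := hb.1.subset_ground hub
  rcases pair_eq_pair_iff.1 (hbs.pair_eq_of_mem_Fij hM hc hg hc' hg'
    (hM.mem_Fij_rotate hE hgF) (hM.mem_Fij_rotate hE hgF')) with ⟨h, -⟩ | ⟨h, -⟩
  · exact h
  · exact absurd (h ▸ hcb) (hb.1.indep.notMem_of_mem_Fij hub hc'b hgF')

end Adjb

lemma eq_of_reflTransGen_of_bipartite {R : α → α → Prop} {P : Set α} {c c' : α}
    (hsymm : ∀ ⦃x y⦄, R x y → R y x) (hbip : ∀ ⦃x y⦄, R x y → (x ∈ P ↔ y ∉ P))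
    (huniq : ∀ ⦃x c c'⦄, R x c → R x c' → c ∈ P → c' ∈ P → c = c') (hc : c ∈ P) (hc' : c' ∈ P)
    (h : Relation.ReflTransGen R c c') : c = c' := by
  have hstar : ∀ y, Relation.ReflTransGen R c y → y = c ∨ R c y := by
    intro y hy
    induction hy with
    | refl => exact .inl rfl
    | tail _ hyz ih =>
      rcases ih with rfl | hcy
      · exact .inr hyz
      · have hz := not_not.1 (mt (hbip hyz).2 ((hbip hcy).1 hc))
        exact .inl (huniq (hsymm hcy) hyz hc hz).symm
  rcases hstar c' h with h | h
  exacts [h.symm, absurd hc' ((hbip h).1 hc)]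

lemma mRank_ground_eq_ncard (hfin : M.E.Finite) (hb : M.IsBase b) : mRank M M.E = b.ncard := by
  refine IsGreatest.csSup_eq ⟨⟨b, hb.indep, hb.subset_ground, rfl⟩, ?_⟩
  rintro n ⟨I, hI, -, rfl⟩
  obtain ⟨B, hB, hIB⟩ := hI.exists_isBase_superset
  exact (ncard_le_ncard hIB (hfin.subset hB.subset_ground)).trans_eq (hB.ncard_eq_ncard_of_isBase hb)

lemma exists_adjb [M.RankFinite] (hM : MSimple M) (hconn : MConnected M) (hb : IsCremonaBasis M b)
    (hbs : IsCremonaBasis M bs) (hb3 : 3 ≤ b.ncard) (hu : u ∈ b) (hubs : u ∉ bs) :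
    ∃ c ∈ b ∩ bs, Adjb M b bs u c := by
  obtain ⟨c, hc, g, hg, hgF, -⟩ := hb.exists_mem_inter_Fij hM hconn hbs hb3 hu hubs
  exact ⟨c, hc, hu, hc.1, fun h => hubs (h ▸ hc.2), g, hg, hgF⟩

lemma suppb_eq_self [M.RankFinite] (hM : MSimple M) (hconn : MConnected M)
    (hb : IsCremonaBasis M b) (hbs : IsCremonaBasis M bs) (hb3 : 3 ≤ b.ncard) :
    suppb M b bs = b := by
  refine suppb_subset.antisymm fun p hp => mem_suppb_iff.2 ⟨hp, ?_⟩
  by_cases hpbs : p ∈ bs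
  · exact .inl hpbs
  obtain ⟨c, hc, -, -, hcp, hF⟩ := exists_adjb hM hconn hb hbs hb3 hp hpbs
  exact .inr ⟨c, hc.1, hcp.symm, hF⟩

lemma inter_nonempty [M.RankFinite] (hM : MSimple M) (hconn : MConnected M)
    (hb : IsCremonaBasis M b) (hbs : IsCremonaBasis M bs) (hb3 : 3 ≤ b.ncard) :
    (b ∩ bs).Nonempty := by
  obtain ⟨u, hu⟩ := nonempty_of_ncard_ne_zero (by omega : b.ncard ≠ 0)
  by_cases hubs : u ∈ bs
  exacts [⟨u, hu, hubs⟩, (exists_adjb hM hconn hb hbs hb3 hu hubs).imp fun _ h => h.1]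

lemma eq_of_reflTransGen_adjb [M.RankFinite] (hM : MSimple M) (hconn : MConnected M)
    (hb : IsCremonaBasis M b) (hbs : IsCremonaBasis M bs) (hb3 : 3 ≤ b.ncard) {c c' : α}
    (hc : c ∈ bs) (hc' : c' ∈ bs) (h : Relation.ReflTransGen (Adjb M b bs) c c') : c = c' := by
  refine eq_of_reflTransGen_of_bipartite (fun _ _ => Adjb.symm) (fun x y hxy => ⟨?_, ?_⟩)
    (fun _ _ _ h h' => Adjb.eq_of_adjb hM hb hbs h h') hc hc' h
  · exact hxy.notMem_of_mem hbs.1.indep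
  · exact fun hy => by_contra fun hx => hy (hxy.mem_of_notMem hM hconn hb hbs hb3 hx)

lemma reflTransGen_adjb_of_inter_eq_singleton [M.RankFinite] (hM : MSimple M)
    (hconn : MConnected M) (hb : IsCremonaBasis M b) (hbs : IsCremonaBasis M bs)
    (hb3 : 3 ≤ b.ncard) {c : α} (hc : b ∩ bs = {c}) (hu : u ∈ b) :
    Relation.ReflTransGen (Adjb M b bs) u c := by
  by_cases hubs : u ∈ bs
  · exact (hc.subset ⟨hu, hubs⟩ : u = c) ▸ .refl
  · obtain ⟨c', hc', hadj⟩ := exists_adjb hM hconn hb hbs hb3 hu hubs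
    exact .single ((hc.subset hc' : c' = c) ▸ hadj)

theorem stmt8_general (M : Matroid α) (hfin : M.E.Finite) (hsimple : MSimple M)
    (hconn : MConnected M) (d : ℕ) (hd : 2 ≤ d) (hrk : mRank M M.E = d + 1)
    (b bs : Set α) (hb : IsCremonaBasis M b) (hbs : IsCremonaBasis M bs) :
    SuppConnected M b bs ↔ (b ∩ bs).ncard = 1 := by
  have : M.Finite := ⟨hfin⟩
  have hb3 : 3 ≤ b.ncard := by rw [← mRank_ground_eq_ncard hfin hb.1]; omega
  rw [SuppConnected, suppb_eq_self hsimple hconn hb hbs hb3, ncard_eq_one]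
  constructor
  · intro hconnG
    obtain ⟨c, hc⟩ := inter_nonempty hsimple hconn hb hbs hb3
    refine ⟨c, eq_singleton_iff_unique_mem.2 ⟨hc, fun c' hc' => ?_⟩⟩
    exact (eq_of_reflTransGen_adjb hsimple hconn hb hbs hb3 hc.2 hc'.2
      (hconnG c hc.1 c' hc'.1)).symm
  · rintro ⟨c, hc⟩ x hx y hy
    have hyc := reflTransGen_adjb_of_inter_eq_singleton hsimple hconn hb hbs hb3 hc hy
    exact (reflTransGen_adjb_of_inter_eq_singleton hsimple hconn hb hbs hb3 hc hx).trans
      (Relation.ReflTransGen.mono (fun _ _ => Adjb.symm) _ _ (Relation.reflTransGen_swap.2 hyc))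

/-- The support graph `G_b(b*)` is connected iff `|b ∩ b*| = 1`. -/
theorem stmt8 (M : Matroid α) (hfin : M.E.Finite) (hsimple : MSimple M)
    (hconn : MConnected M) (d : ℕ) (hd : 2 ≤ d) (hrk : mRank M M.E = d + 1)
    (b bs : Set α) (hb : IsCremonaBasis M b) (hbs : IsCremonaBasis M bs) (hne : b ≠ bs) :
    SuppConnected M b bs ↔ (b ∩ bs).ncard = 1 :=
  stmt8_general M hfin hsimple hconn d hd hrk b bs hb hbs
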